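/- Under the covariance assumption |cov(X(s₁),X(s₂))| ≤ C(1+‖s₁‖^γ+‖s₂‖^γ)ρ(‖s₁-s₂‖) with ρ bounded and ρ(u) ≤ u^{-β} for u ≥ 1, β < d, if an increasing sequence of positive reals (μₙ) satisfies Σₙ μₙ^{-(β-γ)} < ∞, then ξ(μₙ) = μₙ^{-d}∫_{μₙΔ} X(s) ds converges to 0 almost surely as n → ∞. -/

import Mathlib

/-!
Write `Y(a) = ∫_{aΔ} X s ds`, so that `ξ(a) = a^{-d} Y(a)`, and let `Δ ⊆ B(0, R)`. By Fubini,
`E[Y(a)²] = ∫∫_{aΔ × aΔ} E[X s X t] ds dt`. Since `ρ ≤ M` and `ρ(u) ≤ u^{-β}` for `u ≥ 1`, we have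
`ρ(u) ≤ max(M, 1) u^{-β}` for `u > 0`, so off the diagonal
`|E[X s X t]| ≤ C max(M, 1) (1 + 2 (aR)^γ) ‖s - t‖^{-β}`, and `‖x‖^{-β}` is locally integrable
because `β < d`. Translation invariance bounds the double integral by
`|aΔ| ∫_{B(0, 2aR)} ‖x‖^{-β} dx = O(a^d · a^{d-β})`, so `E[ξ(a)²] = O(a^{γ-β})` for `a ≥ 1`.
Along `(μₙ)` the second moments are therefore summable; then `∑ₙ ξ(μₙ)²` has finite expectation,
hence is finite almost surely, and its terms tend to `0`.
-/

open MeasureTheory Pointwise Filter Topology Metric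

theorem ae_tendsto_zero_of_summable_integral_sq {Ω : Type*} [MeasurableSpace Ω] {P : Measure Ω}
    {f : ℕ → Ω → ℝ} (hf : ∀ n, Integrable (fun ω => f n ω ^ 2) P)
    (hsum : Summable fun n => ∫ ω, f n ω ^ 2 ∂P) :
    ∀ᵐ ω ∂P, Tendsto (fun n => f n ω) atTop (𝓝 0) := by
  have hmeas : ∀ n, AEMeasurable (fun ω => ENNReal.ofReal (f n ω ^ 2)) P := fun n =>
    (hf n).aemeasurable.ennreal_ofReal
  have hfinite : ∫⁻ ω, ∑' n, ENNReal.ofReal (f n ω ^ 2) ∂P ≠ ⊤ := by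
    rw [lintegral_tsum hmeas]
    simp_rw [← ofReal_integral_eq_lintegral_ofReal (hf _) (ae_of_all _ fun _ => sq_nonneg _)]
    rw [← ENNReal.ofReal_tsum_of_nonneg (fun n => integral_nonneg fun _ => sq_nonneg _) hsum]
    exact ENNReal.ofReal_ne_top
  filter_upwards [ae_lt_top' (AEMeasurable.tsum hmeas) hfinite] with ω hω
  have hsq : Tendsto (fun n => f n ω ^ 2) atTop (𝓝 0) := by
    have := (ENNReal.tendsto_toReal ENNReal.zero_ne_top).comp
      (ENNReal.tendsto_atTop_zero_of_tsum_ne_top hω.ne)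
    simpa [Function.comp_def, ENNReal.toReal_ofReal (sq_nonneg _)] using this
  rw [tendsto_zero_iff_abs_tendsto_zero]
  simpa [Function.comp_def, Real.sqrt_sq_eq_abs] using hsq.sqrt

theorem eventually_one_lt_of_summable_rpow {u : ℕ → ℝ} {a : ℝ} (hpos : ∀ n, 0 < u n)
    (hmono : Monotone u) (hsum : Summable fun n => u n ^ a) : ∀ᶠ n in atTop, 1 < u n := by
  have ha : a < 0 := by
    by_contra! ha
    have : u 0 ^ a ≤ 0 := ge_of_tendsto' hsum.tendsto_atTop_zero fun n =>
      Real.rpow_le_rpow (hpos 0).le (hmono n.zero_le) ha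
    exact this.not_gt (Real.rpow_pos_of_pos (hpos 0) a)
  filter_upwards [hsum.tendsto_atTop_zero.eventually (gt_mem_nhds one_pos)] with n hn
  exact (((Real.rpow_lt_one_iff_of_pos (hpos n)).1 hn).resolve_right
    fun h => h.2.not_gt ha).1

theorem le_mul_rpow_neg_of_bounded {ρ : ℝ → ℝ} {M β : ℝ} (hβ : 0 ≤ β)
    (hM : ∀ u, 0 ≤ u → ρ u ≤ M) (hρ : ∀ u, 1 ≤ u → ρ u ≤ u ^ (-β)) {u : ℝ} (hu : 0 < u) :
    ρ u ≤ max M 1 * u ^ (-β) := by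
  rcases le_or_gt 1 u with h1 | h1
  · calc ρ u ≤ u ^ (-β) := hρ u h1
      _ ≤ max M 1 * u ^ (-β) :=
        le_mul_of_one_le_left (Real.rpow_nonneg hu.le _) (le_max_right _ _)
  · calc ρ u ≤ max M 1 := (hM u hu.le).trans (le_max_left _ _)
      _ ≤ max M 1 * u ^ (-β) := le_mul_of_one_le_right (by positivity)
        (Real.one_le_rpow_of_pos_of_le_one_of_nonpos hu h1.le (neg_nonpos.2 hβ))

section Covariance

variable {E Ω : Type*} [NormedAddCommGroup E] [MeasurableSpace Ω] {P : Measure Ω}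
  {X : E → Ω → ℝ} {ρ : ℝ → ℝ} {C M γ β : ℝ}

theorem abs_integral_mul_le_mul_rpow_neg (hC : 0 ≤ C) (hβ : 0 ≤ β)
    (hM : ∀ u, 0 ≤ u → ρ u ≤ M) (hρ : ∀ u, 1 ≤ u → ρ u ≤ u ^ (-β))
    (hcov : ∀ s t, |∫ ω, X s ω * X t ω ∂P| ≤ C * (1 + ‖s‖ ^ γ + ‖t‖ ^ γ) * ρ ‖s - t‖)
    (s t : E) (hst : s ≠ t) :
    |∫ ω, X s ω * X t ω ∂P| ≤ C * max M 1 * (1 + ‖s‖ ^ γ + ‖t‖ ^ γ) * ‖s - t‖ ^ (-β) := by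
  have hρst := le_mul_rpow_neg_of_bounded hβ hM hρ (norm_pos_iff.2 (sub_ne_zero.2 hst))
  calc _ ≤ C * (1 + ‖s‖ ^ γ + ‖t‖ ^ γ) * ρ ‖s - t‖ := hcov s t
    _ ≤ C * (1 + ‖s‖ ^ γ + ‖t‖ ^ γ) * (max M 1 * ‖s - t‖ ^ (-β)) := by gcongr
    _ = _ := by ring

theorem integral_sq_le_of_abs_integral_mul_le (hC : 0 ≤ C) (hM : ∀ u, 0 ≤ u → ρ u ≤ M)
    (hcov : ∀ s t, |∫ ω, X s ω * X t ω ∂P| ≤ C * (1 + ‖s‖ ^ γ + ‖t‖ ^ γ) * ρ ‖s - t‖)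
    (s : E) : ∫ ω, X s ω ^ 2 ∂P ≤ C * max M 1 * (1 + 2 * ‖s‖ ^ γ) :=
  calc _ ≤ C * (1 + ‖s‖ ^ γ + ‖s‖ ^ γ) * ρ ‖s - s‖ := by
        simpa [sq] using (le_abs_self _).trans (hcov s s)
    _ ≤ C * (1 + ‖s‖ ^ γ + ‖s‖ ^ γ) * max M 1 := by
        gcongr
        exact (hM _ (norm_nonneg _)).trans (le_max_left _ _)
    _ = _ := by ring

end Covariance

section Translation

variable {G : Type*} [NormedAddCommGroup G] [MeasurableSpace G] [OpensMeasurableSpace G]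
  [MeasurableAdd G] [MeasurableNeg G] {μ : Measure G} [μ.IsAddLeftInvariant] [μ.IsNegInvariant]

theorem setIntegral_setIntegral_le_of_abs_le_sub {A : Set G} (hAm : MeasurableSet A)
    (hAfin : μ A ≠ ⊤) {r : ℝ} (hAr : A ⊆ ball 0 r) {k : G → ℝ} (hk0 : ∀ x, 0 ≤ k x)
    (hk : IntegrableOn k (ball 0 (2 * r)) μ) {F : G → G → ℝ}
    (hF : ∀ s ∈ A, ∀ᵐ t ∂μ.restrict A, |F s t| ≤ k (s - t)) :
    ∫ s in A, ∫ t in A, F s t ∂μ ∂μ ≤ μ.real A * ∫ x in ball 0 (2 * r), k x ∂μ := by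
  set J := ∫ x in ball 0 (2 * r), k x ∂μ
  have hJ : 0 ≤ J := setIntegral_nonneg measurableSet_ball fun x _ => hk0 x
  have hinner : ∀ s ∈ A, ∫ t in A, F s t ∂μ ≤ J := by
    intro s hs
    have hkt : Integrable (fun t => (ball 0 (2 * r)).indicator k (s - t)) μ :=
      ((integrable_indicator_iff measurableSet_ball).2 hk).comp_sub_left s
    calc ∫ t in A, F s t ∂μ ≤ ∫ t in A, |F s t| ∂μ :=
          (le_abs_self _).trans abs_integral_le_integral_abs
      _ ≤ ∫ t in A, (ball 0 (2 * r)).indicator k (s - t) ∂μ := by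
          refine integral_mono_of_nonneg (ae_of_all _ fun _ => abs_nonneg _) hkt.integrableOn ?_
          filter_upwards [hF s hs, ae_restrict_mem hAm] with t hst ht
          have hsr := mem_ball_zero_iff.1 (hAr hs)
          have htr := mem_ball_zero_iff.1 (hAr ht)
          rwa [Set.indicator_of_mem
            (mem_ball_zero_iff.2 <| (norm_sub_le s t).trans_lt (by linarith))]
      _ ≤ ∫ t, (ball 0 (2 * r)).indicator k (s - t) ∂μ :=
          setIntegral_le_integral hkt
            (ae_of_all _ fun _ => Set.indicator_nonneg (fun x _ => hk0 x) _)
      _ = J := by rw [integral_sub_left_eq_self, integral_indicator measurableSet_ball]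
  by_cases hint : Integrable (fun s => ∫ t in A, F s t ∂μ) (μ.restrict A)
  · calc _ ≤ ∫ _ in A, J ∂μ := setIntegral_mono_on hint (integrableOn_const hAfin) hAm hinner
      _ = μ.real A * J := by rw [setIntegral_const, smul_eq_mul]
  · rw [integral_undef hint]
    exact mul_nonneg measureReal_nonneg hJ

end Translation

section SecondMoment

variable {Ω : Type*} [MeasurableSpace Ω] {P : Measure Ω}

theorem integrable_mul_and_integral_abs_mul_le {f g : Ω → ℝ} (hf : AEStronglyMeasurable f P)
    (hg : AEStronglyMeasurable g P) (hf2 : Integrable (fun ω => f ω ^ 2) P)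
    (hg2 : Integrable (fun ω => g ω ^ 2) P) :
    Integrable (fun ω => f ω * g ω) P ∧
      ∫ ω, |f ω * g ω| ∂P ≤ (∫ ω, f ω ^ 2 ∂P + ∫ ω, g ω ^ 2 ∂P) / 2 := by
  have hamgm : ∀ a b : ℝ, |a * b| ≤ (a ^ 2 + b ^ 2) / 2 := fun a b => by
    rw [abs_mul]
    nlinarith [sq_nonneg (|a| - |b|), sq_abs a, sq_abs b]
  have hint : Integrable (fun ω => f ω * g ω) P :=
    ((hf2.add hg2).div_const 2).mono' (hf.mul hg) (ae_of_all _ fun ω => hamgm _ _)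
  refine ⟨hint, ?_⟩
  rw [← integral_add hf2 hg2, ← integral_div]
  exact integral_mono hint.abs ((hf2.add hg2).div_const 2) fun ω => hamgm _ _

variable {S : Type*} [MeasurableSpace S] {ν : Measure S} [IsFiniteMeasure ν] [SFinite P]

theorem integral_sq_integral_eq {X : S → Ω → ℝ} (hX : Measurable (Function.uncurry X))
    (hXsq : ∀ s, Integrable (fun ω => X s ω ^ 2) P) {L : ℝ}
    (hL : ∀ᵐ s ∂ν, ∫ ω, X s ω ^ 2 ∂P ≤ L) :
    Integrable (fun ω => (∫ s, X s ω ∂ν) ^ 2) P ∧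
      ∫ ω, (∫ s, X s ω ∂ν) ^ 2 ∂P = ∫ s, ∫ t, ∫ ω, X s ω * X t ω ∂P ∂ν ∂ν := by
  have hXs : ∀ s, AEStronglyMeasurable (X s) P := fun s =>
    (hX.comp measurable_prodMk_left).aestronglyMeasurable
  have hmul := fun s t => integrable_mul_and_integral_abs_mul_le (hXs s) (hXs t) (hXsq s) (hXsq t)
  set G : (S × S) × Ω → ℝ := fun p => X p.1.1 p.2 * X p.1.2 p.2
  have hGm : Measurable G :=
    (hX.comp (measurable_fst.fst.prodMk measurable_snd)).mul
      (hX.comp (measurable_fst.snd.prodMk measurable_snd))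
  have hG : Integrable G ((ν.prod ν).prod P) := by
    rw [integrable_prod_iff hGm.aestronglyMeasurable]
    refine ⟨ae_of_all _ fun p => (hmul p.1 p.2).1, (integrable_const L).mono'
      hGm.norm.stronglyMeasurable.integral_prod_right'.aestronglyMeasurable ?_⟩
    filter_upwards [Measure.quasiMeasurePreserving_fst.ae hL,
      Measure.quasiMeasurePreserving_snd.ae hL] with p h1 h2
    rw [Real.norm_of_nonneg (integral_nonneg fun _ => norm_nonneg _)]
    simp only [G, Real.norm_eq_abs]
    linarith [(hmul p.1 p.2).2]
  have hsq : ∀ ω, (∫ s, X s ω ∂ν) ^ 2 = ∫ s, ∫ t, X s ω * X t ω ∂ν ∂ν := fun ω => by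
    simp_rw [integral_const_mul, integral_mul_const, sq]
  have hYsq : (fun ω => (∫ s, X s ω ∂ν) ^ 2) =ᵐ[P] fun ω => ∫ p, G (p, ω) ∂(ν.prod ν) := by
    filter_upwards [hG.prod_left_ae] with ω hω
    rw [hsq, integral_prod _ hω]
  refine ⟨hG.integral_prod_right.congr hYsq.symm, ?_⟩
  rw [integral_congr_ae hYsq, ← integral_integral_swap (f := fun p ω => G (p, ω)) hG,
    integral_prod _ hG.integral_prod_left]

end SecondMoment

section HaarMeasure

variable {E : Type*} [NormedAddCommGroup E] [NormedSpace ℝ E] [FiniteDimensional ℝ E]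
  [Nontrivial E] [MeasurableSpace E] [BorelSpace E] (μ : Measure E) [μ.IsAddHaarMeasure]

local notation "dim" => Module.finrank ℝ E

theorem integral_ball_norm_rpow_neg {α r : ℝ} (hα : α < dim) (hr : 0 ≤ r) :
    ∫ x in ball 0 r, ‖x‖ ^ (-α) ∂μ = dim * μ.real (ball 0 1) * (r ^ (dim - α) / (dim - α)) := by
  have hsub : (0 : ℝ) < dim - α := by linarith
  have hind : ∫ x in ball 0 r, ‖x‖ ^ (-α) ∂μ = ∫ x, (Set.Iio r).indicator (· ^ (-α)) ‖x‖ ∂μ := by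
    rw [← integral_indicator measurableSet_ball]
    congr 1 with x
    simp [Set.indicator]
  have hradial : ∫ y in Set.Ioi (0 : ℝ), y ^ (dim - 1) • (Set.Iio r).indicator (· ^ (-α)) y
      = r ^ (dim - α) / (dim - α) := by
    have hpow : Set.EqOn (fun y : ℝ => y ^ (dim - 1) • (Set.Iio r).indicator (· ^ (-α)) y)
        (fun y => y ^ ((dim : ℝ) - α - 1)) (Set.Ioo 0 r) := by
      intro y ⟨hy0, hyr⟩
      simp only [smul_eq_mul, Set.indicator_of_mem (Set.mem_Iio.2 hyr)]
      rw [← Real.rpow_natCast, ← Real.rpow_add hy0, Nat.cast_sub Module.finrank_pos, Nat.cast_one]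
      ring_nf
    calc _ = ∫ y in Set.Ioo 0 r, y ^ (dim - 1) • (Set.Iio r).indicator (· ^ (-α)) y :=
          setIntegral_eq_of_subset_of_forall_sdiff_eq_zero measurableSet_Ioi Set.Ioo_subset_Ioi_self
            fun y hy => by
              rw [Set.indicator_of_notMem (s := Set.Iio r) fun h => hy.2 ⟨hy.1, h⟩, smul_zero]
      _ = ∫ y in (0 : ℝ)..r, y ^ ((dim : ℝ) - α - 1) := by
        rw [setIntegral_congr_fun measurableSet_Ioo hpow, intervalIntegral.integral_of_le hr,
          integral_Ioc_eq_integral_Ioo]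
      _ = r ^ (dim - α) / (dim - α) := by
        rw [integral_rpow (Or.inl (by linarith))]
        simp [Real.zero_rpow hsub.ne']
  rw [hind, integral_fun_norm_addHaar, hradial, nsmul_eq_mul, smul_eq_mul]
  ring

theorem integral_sq_setIntegral_le
    {Ω : Type*} [MeasurableSpace Ω] {P : Measure Ω} [SFinite P]
    {X : E → Ω → ℝ} (hX : Measurable (Function.uncurry X))
    (hXsq : ∀ s, Integrable (fun ω => X s ω ^ 2) P) {c γ β : ℝ} (hc : 0 ≤ c) (hγ : 0 ≤ γ)
    (hβ : β < dim)
    (hcov : ∀ s t, s ≠ t →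
      |∫ ω, X s ω * X t ω ∂P| ≤ c * (1 + ‖s‖ ^ γ + ‖t‖ ^ γ) * ‖s - t‖ ^ (-β))
    (hvar : ∀ s, ∫ ω, X s ω ^ 2 ∂P ≤ c * (1 + 2 * ‖s‖ ^ γ))
    {A : Set E} (hAm : MeasurableSet A) (hAfin : μ A ≠ ⊤)
    {r : ℝ} (hr : 0 ≤ r) (hAr : A ⊆ ball 0 r) :
    Integrable (fun ω => (∫ s in A, X s ω ∂μ) ^ 2) P ∧
      ∫ ω, (∫ s in A, X s ω ∂μ) ^ 2 ∂P ≤ c * (1 + 2 * r ^ γ) * μ.real A *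
        (dim * μ.real (ball 0 1) * ((2 * r) ^ (dim - β) / (dim - β))) := by
  have hweight : ∀ s ∈ A, ‖s‖ ^ γ ≤ r ^ γ := fun s hs =>
    Real.rpow_le_rpow (norm_nonneg s) (mem_ball_zero_iff.1 (hAr hs)).le hγ
  have : IsFiniteMeasure (μ.restrict A) := isFiniteMeasure_restrict.2 hAfin
  obtain ⟨hint, heq⟩ := integral_sq_integral_eq (ν := μ.restrict A) hX hXsq
    (L := c * (1 + 2 * r ^ γ)) <| by
      filter_upwards [ae_restrict_mem hAm] with s hs
      exact (hvar s).trans (mul_le_mul_of_nonneg_left (by linarith [hweight s hs]) hc)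
  refine ⟨hint, heq.trans_le ?_⟩
  have hk : IntegrableOn (fun x : E => ‖x‖ ^ (-β)) (ball 0 (2 * r)) μ :=
    integrableOn_ball_of_norm_le_rpow Module.finrank_pos hβ (C := 1)
      (ae_of_all _ fun x => by rw [one_mul, Real.norm_of_nonneg (by positivity)])
      (measurable_norm.pow_const _).aestronglyMeasurable
  calc _ ≤ μ.real A * ∫ x in ball 0 (2 * r), c * (1 + 2 * r ^ γ) * ‖x‖ ^ (-β) ∂μ := by
        refine setIntegral_setIntegral_le_of_abs_le_sub hAm hAfin hAr
          (fun x => by positivity) (hk.const_mul _) fun s hs => ?_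
        -- `0 ^ (-β) = 0`, so the kernel bound fails on the diagonal `t = s`, a null set.
        filter_upwards [ae_restrict_of_ae (μ.ae_ne s), ae_restrict_mem hAm] with t hts ht
        refine (hcov s t hts.symm).trans (mul_le_mul_of_nonneg_right
          (mul_le_mul_of_nonneg_left ?_ hc) (by positivity))
        linarith [hweight s hs, hweight t ht]
    _ = _ := by
        rw [integral_const_mul, integral_ball_norm_rpow_neg μ hβ (by positivity)]
        ring

theorem exists_integral_sq_smul_setIntegral_le
    {Ω : Type*} [MeasurableSpace Ω] {P : Measure Ω} [SFinite P]
    {X : E → Ω → ℝ} (hX : Measurable (Function.uncurry X))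
    (hXsq : ∀ s, Integrable (fun ω => X s ω ^ 2) P) {c γ β : ℝ} (hc : 0 ≤ c) (hγ : 0 ≤ γ)
    (hβ : β < dim)
    (hcov : ∀ s t, s ≠ t →
      |∫ ω, X s ω * X t ω ∂P| ≤ c * (1 + ‖s‖ ^ γ + ‖t‖ ^ γ) * ‖s - t‖ ^ (-β))
    (hvar : ∀ s, ∫ ω, X s ω ^ 2 ∂P ≤ c * (1 + 2 * ‖s‖ ^ γ))
    {Δ : Set E} (hΔ : IsCompact Δ) {R : ℝ}
    (hR : 0 < R) (hΔR : Δ ⊆ ball 0 R) :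
    ∃ D, ∀ a : ℝ, 1 ≤ a →
      Integrable (fun ω => (a ^ (-(dim : ℝ)) * ∫ s in a • Δ, X s ω ∂μ) ^ 2) P ∧
      ∫ ω, (a ^ (-(dim : ℝ)) * ∫ s in a • Δ, X s ω ∂μ) ^ 2 ∂P ≤ D * a ^ (γ - β) := by
  refine ⟨c * (1 + 2 * R ^ γ) * μ.real Δ * (dim * μ.real (ball 0 1) / (dim - β)) *
    (2 * R) ^ (dim - β), fun a ha => ?_⟩
  have ha0 : 0 < a := one_pos.trans_le ha
  have hAr : a • Δ ⊆ ball 0 (a * R) := by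
    simpa [_root_.smul_ball ha0.ne', abs_of_pos ha0] using Set.smul_set_mono (a := a) hΔR
  have hvol : μ.real (a • Δ) = a ^ (dim : ℝ) * μ.real Δ := by
    rw [measureReal_def, Measure.addHaar_smul_of_nonneg μ ha0.le, ENNReal.toReal_mul,
      ENNReal.toReal_ofReal (by positivity), Real.rpow_natCast, measureReal_def]
  obtain ⟨hint, hle⟩ := integral_sq_setIntegral_le μ hX hXsq hc hγ hβ hcov hvar
    (hΔ.smul a).isClosed.measurableSet (hΔ.smul a).measure_lt_top.ne (by positivity) hAr
  simp_rw [mul_pow]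
  refine ⟨hint.const_mul _, ?_⟩
  have hweight : 1 + 2 * (a * R) ^ γ ≤ (1 + 2 * R ^ γ) * a ^ γ := by
    rw [Real.mul_rpow ha0.le hR.le]
    nlinarith [Real.one_le_rpow ha hγ, Real.rpow_nonneg hR.le γ]
  have hscale : (a ^ (-(dim : ℝ))) ^ 2 * a ^ (dim : ℝ) * (2 * (a * R)) ^ (dim - β) * a ^ γ =
      (2 * R) ^ (dim - β) * a ^ (γ - β) := by
    rw [show 2 * (a * R) = a * (2 * R) by ring, Real.mul_rpow ha0.le (by positivity), sq]
    have hexp : a ^ (-(dim : ℝ)) * a ^ (-(dim : ℝ)) * a ^ (dim : ℝ) * a ^ (dim - β) * a ^ γ =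
        a ^ (γ - β) := by
      simp only [← Real.rpow_add ha0]
      ring_nf
    linear_combination (2 * R) ^ (dim - β) * hexp
  calc _ = (a ^ (-(dim : ℝ))) ^ 2 * ∫ ω, (∫ s in a • Δ, X s ω ∂μ) ^ 2 ∂P := integral_const_mul _ _
    _ ≤ (a ^ (-(dim : ℝ))) ^ 2 * (c * (1 + 2 * (a * R) ^ γ) * μ.real (a • Δ) *
        (dim * μ.real (ball 0 1) * ((2 * (a * R)) ^ (dim - β) / (dim - β)))) := by gcongr
    _ ≤ (a ^ (-(dim : ℝ))) ^ 2 * (c * ((1 + 2 * R ^ γ) * a ^ γ) * μ.real (a • Δ) *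
        (dim * μ.real (ball 0 1) * ((2 * (a * R)) ^ (dim - β) / (dim - β)))) := by
        gcongr
    _ = _ := by
        rw [hvol]
        linear_combination c * (1 + 2 * R ^ γ) * μ.real Δ * (dim * μ.real (ball 0 1) / (dim - β)) *
          hscale

end HaarMeasure

theorem stmt_3_general (d : ℕ) (hd : 1 ≤ d) {Ω : Type*} [MeasureSpace Ω]
    (P : Measure Ω) [IsProbabilityMeasure P]
    (X : EuclideanSpace ℝ (Fin d) → Ω → ℝ)
    (hXmeas : Measurable (Function.uncurry X))
    (hXsq : ∀ s, Integrable (fun ω => (X s ω) ^ 2) P)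
    (C γ β : ℝ) (hC : 0 < C) (hγ : 0 ≤ γ) (hβ : 0 < β) (hβd : β < d)
    (ρ : ℝ → ℝ)
    (hρbdd : ∃ M, ∀ u, 0 ≤ u → ρ u ≤ M)
    (hρdec : ∀ u, 1 ≤ u → ρ u ≤ u ^ (-β))
    (hcov : ∀ s₁ s₂, |∫ ω, X s₁ ω * X s₂ ω ∂P| ≤
      C * (1 + ‖s₁‖ ^ γ + ‖s₂‖ ^ γ) * ρ ‖s₁ - s₂‖)
    (Δ : Set (EuclideanSpace ℝ (Fin d))) (hΔc : IsCompact Δ)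
    (ξ : ℝ → Ω → ℝ)
    (hξ : ∀ μ ω, ξ μ ω = μ ^ (-(d : ℝ)) * ∫ s in μ • Δ, X s ω ∂volume)
    (μseq : ℕ → ℝ) (hμpos : ∀ n, 0 < μseq n) (hμmono : StrictMono μseq)
    (hsum : Summable (fun n => (μseq n) ^ (-(β - γ)))) :
    ∀ᵐ ω ∂P, Tendsto (fun n => ξ (μseq n) ω) atTop (nhds 0) := by
  obtain ⟨M, hM⟩ := hρbdd
  have : Nontrivial (EuclideanSpace ℝ (Fin d)) :=
    Module.nontrivial_of_finrank_pos (R := ℝ) (by rw [finrank_euclideanSpace_fin]; exact hd)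
  obtain ⟨R, hR, hΔR⟩ := hΔc.isBounded.subset_ball_lt 0 0
  obtain ⟨D, hD⟩ := exists_integral_sq_smul_setIntegral_le volume hXmeas hXsq
    (by positivity) hγ (by simpa using hβd)
    (abs_integral_mul_le_mul_rpow_neg hC.le hβ.le hM hρdec hcov)
    (integral_sq_le_of_abs_integral_mul_le hC.le hM hcov) hΔc hR hΔR
  simp only [finrank_euclideanSpace_fin, ← hξ] at hD
  obtain ⟨N, hN⟩ :=
    (eventually_one_lt_of_summable_rpow hμpos hμmono.monotone hsum).exists_forall_of_atTop
  have hsumN : Summable fun n => ∫ ω, ξ (μseq (n + N)) ω ^ 2 ∂P := by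
    refine Summable.of_nonneg_of_le (fun n => integral_nonneg fun _ => sq_nonneg _)
      (fun n => (hD _ (hN _ (Nat.le_add_left N n)).le).2) ?_
    simpa [neg_sub] using ((summable_nat_add_iff N).2 hsum).mul_left D
  filter_upwards [ae_tendsto_zero_of_summable_integral_sq
    (fun n => (hD _ (hN _ (Nat.le_add_left N n)).le).1) hsumN] with ω hω
  exact (tendsto_add_atTop_iff_nat N).1 hω

/-- Lemma 1(i): under the covariance assumption with `β < d`, if the increasing positive
sequence `(μₙ)` satisfies `Σₙ μₙ^{-(β-γ)} < ∞`, then `ξ(μₙ) → 0` almost surely. -/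
theorem stmt_3 (d : ℕ) (hd : 1 ≤ d) {Ω : Type*} [MeasureSpace Ω]
    (P : Measure Ω) [IsProbabilityMeasure P]
    (X : EuclideanSpace ℝ (Fin d) → Ω → ℝ)
    (hXmeas : Measurable (Function.uncurry X))
    (hXsq : ∀ s, Integrable (fun ω => (X s ω) ^ 2) P)
    (hmean : ∀ s, ∫ ω, X s ω ∂P = 0)
    (C γ β : ℝ) (hC : 0 < C) (hγ : 0 ≤ γ) (hβ : 0 < β) (hβd : β < d)
    (ρ : ℝ → ℝ) (hρpos : ∀ u, 0 ≤ u → 0 < ρ u)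
    (hρbdd : ∃ M, ∀ u, 0 ≤ u → ρ u ≤ M)
    (hρdec : ∀ u, 1 ≤ u → ρ u ≤ u ^ (-β))
    (hcov : ∀ s₁ s₂, |∫ ω, X s₁ ω * X s₂ ω ∂P| ≤
      C * (1 + ‖s₁‖ ^ γ + ‖s₂‖ ^ γ) * ρ ‖s₁ - s₂‖)
    (Δ : Set (EuclideanSpace ℝ (Fin d))) (hΔc : IsCompact Δ)
    (hΔ0 : (0 : EuclideanSpace ℝ (Fin d)) ∈ Δ) (hΔm : 0 < volume Δ)
    (ξ : ℝ → Ω → ℝ)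
    (hξ : ∀ μ ω, ξ μ ω = μ ^ (-(d : ℝ)) * ∫ s in μ • Δ, X s ω ∂volume)
    (μseq : ℕ → ℝ) (hμpos : ∀ n, 0 < μseq n) (hμmono : StrictMono μseq)
    (hsum : Summable (fun n => (μseq n) ^ (-(β - γ)))) :
    ∀ᵐ ω ∂P, Tendsto (fun n => ξ (μseq n) ω) atTop (nhds 0) :=
  stmt_3_general d hd P X hXmeas hXsq C γ β hC hγ hβ hβd ρ hρbdd hρdec hcov Δ hΔc ξ hξ μseq hμpos
    hμmono hsum
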